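/- Suppose $a^{(1)}(z)$ is a vector of linear holomorphic polynomials on $\mathbb{C}^n$, $s(z,\bar z)$ and $s^\sharp(z,\bar z)$ are real bihomogeneous polynomials of bidegree $(2,2)$ with $\triangle_\ell s = \triangle_\ell s^\sharp = 0$, and $\langle a^{(1)}(z), \bar z\rangle_\ell \, |z|_\ell^2 = \frac{1}{4}(s(z,\bar z) - s^\sharp(z,\bar z))$ identically. If $n \ge 2$ and $0 \le \ell \le n/2$, then $a^{(1)} \equiv 0$ and $s \equiv s^\sharp$. -/

import Mathlib

open scoped BigOperators ComplexConjugate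

noncomputable section

/-- The sign `ε_j`: `-1` for the first `ℓ` indices, `+1` afterwards. -/
def eps (n ℓ : ℕ) (j : Fin n) : ℂ := if (j : ℕ) < ℓ then -1 else 1

/-- The matrix `g_0^{β̄ α}`: diagonal with entries `-1` (first `ℓ`) and `+1`. -/
def g0 (n ℓ : ℕ) (β α : Fin n) : ℂ := if β = α then eps n ℓ β else 0

/-- The polarized bidegree (2,2) polynomial
`s(z,w) = ∑ s_{α β̄ γ δ̄} z_α w_β z_γ w_δ`, where `w` plays the role of `z̄`. -/
def quartic {n : ℕ} (s : Fin n → Fin n → Fin n → Fin n → ℂ) :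
    (Fin n → ℂ) → (Fin n → ℂ) → ℂ :=
  fun z w => ∑ α : Fin n, ∑ β : Fin n, ∑ γ : Fin n, ∑ δ : Fin n,
    s α β γ δ * z α * w β * z γ * w δ

/-- Holomorphic partial derivative `∂/∂z_j` of a polarized function `f(z,w)`. -/
def Dz {n : ℕ} (f : (Fin n → ℂ) → (Fin n → ℂ) → ℂ) (j : Fin n) :
    (Fin n → ℂ) → (Fin n → ℂ) → ℂ :=
  fun z w => fderiv ℂ (fun z' => f z' w) z (Pi.single j 1)

/-- Antiholomorphic partial derivative `∂/∂z̄_j`, acting on the second (polarized) slot. -/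
def Dw {n : ℕ} (f : (Fin n → ℂ) → (Fin n → ℂ) → ℂ) (j : Fin n) :
    (Fin n → ℂ) → (Fin n → ℂ) → ℂ :=
  fun z w => fderiv ℂ (fun w' => f z w') w (Pi.single j 1)

/-- The signed Laplacian `△_ℓ = -∑_{j≤ℓ} ∂²/∂z_j∂z̄_j + ∑_{j>ℓ} ∂²/∂z_j∂z̄_j`. -/
def lapL {n : ℕ} (ℓ : ℕ) (f : (Fin n → ℂ) → (Fin n → ℂ) → ℂ) :
    (Fin n → ℂ) → (Fin n → ℂ) → ℂ :=
  fun z w => ∑ j : Fin n, eps n ℓ j * Dw (Dz f j) j z w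

/-- The signed norm `|z|_ℓ² = -∑_{j≤ℓ}|z_j|² + ∑_{j>ℓ}|z_j|²` (as a complex number). -/
def nSq (n ℓ : ℕ) (z : Fin n → ℂ) : ℂ := ∑ j : Fin n, eps n ℓ j * z j * conj (z j)

/-- A bidegree (1,1) polynomial `∑_{α,β} a_{α β̄} z_α z̄_β`. -/
def herm {n : ℕ} (a : Fin n → Fin n → ℂ) (z : Fin n → ℂ) : ℂ :=
  ∑ α : Fin n, ∑ β : Fin n, a α β * z α * conj (z β)

/-!
Write `w` for `z̄` and treat both as independent variables. A polynomial in `(z, w)` that vanishes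
on the totally real subspace `w = z̄` vanishes identically, so the hypothesis becomes the polynomial
identity `⟨b z, w⟩ ⟨z, w⟩_ℓ = ¼ (s − s♯)(z, w)` with `b = g₀ a`, and `△_ℓ` may be applied to
both sides. The right side is harmonic, while a direct computation gives
`△_ℓ (⟨b z, w⟩ ⟨z, w⟩_ℓ) = τ ⟨z, w⟩_ℓ + (n + 2) ⟨b z, w⟩` with `τ = ∑ ε_j b_{jj}`. So this
vanishes; applying `△_ℓ` once more yields `(2n + 2) τ = 0`, hence `⟨b z, w⟩ = 0`, i.e. `a = 0`,
and then `s = s♯`.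
-/

open MvPolynomial

/- Substituting `z = x + i y`, `w = x - i y` turns vanishing on `w = z̄` into vanishing at all
real points `(x, y)`. -/
theorem MvPolynomial.eq_zero_of_eval_sumElim_conj {σ : Type*} {P : MvPolynomial (σ ⊕ σ) ℂ}
    (h : ∀ z : σ → ℂ, eval (Sum.elim z fun i => conj (z i)) P = 0) : P = 0 := by
  set f : σ ⊕ σ → MvPolynomial (σ ⊕ σ) ℂ :=
    Sum.elim (fun i => X (.inl i) + C Complex.I * X (.inr i))
      (fun i => X (.inl i) - C Complex.I * X (.inr i))
  have eval_bind (x : σ ⊕ σ → ℂ) : eval x (bind₁ f P) = eval (fun k => eval x (f k)) P :=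
    eval₂Hom_bind₁ _ _ _ _
  have hQ : bind₁ f P = 0 := by
    refine funext_set (fun _ => Set.range Complex.ofReal)
      (fun _ => Set.infinite_range_of_injective Complex.ofReal_injective) fun x hx => ?_
    choose u hu using fun k => hx k trivial
    rw [eval_bind, map_zero, ← h fun i => x (.inl i) + Complex.I * x (.inr i)]
    congr 1
    ext (i | i) <;> simp [f, ← hu, Complex.conj_ofReal, sub_eq_add_neg]
  refine funext fun y => ?_
  have hy : y = fun k => eval (Sum.elim (fun i => (y (.inl i) + y (.inr i)) / 2)
      (fun i => (y (.inl i) - y (.inr i)) / (2 * Complex.I))) (f k) := by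
    ext (i | i) <;>
      simp only [f, Sum.elim_inl, Sum.elim_inr, map_add, map_sub, map_mul, eval_X, eval_C] <;>
      field_simp <;> ring
  rw [hy, ← eval_bind, hQ, map_zero, map_zero]

theorem MvPolynomial.hasFDerivAt_eval_sumElim {𝕜 ι κ : Type*} [NontriviallyNormedField 𝕜]
    [Fintype ι] (P : MvPolynomial (ι ⊕ κ) 𝕜) (z : ι → 𝕜) (w : κ → 𝕜) :
    HasFDerivAt (fun z => eval (Sum.elim z w) P)
      (∑ i, eval (Sum.elim z w) (pderiv (.inl i) P) •
        ContinuousLinearMap.proj (R := 𝕜) (φ := fun _ : ι => 𝕜) i) z := by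
  classical
  induction P using MvPolynomial.induction_on with
  | C a =>
    simp only [eval_C]
    refine (hasFDerivAt_const (𝕜 := 𝕜) a z).congr_fderiv ?_
    ext v
    simp
  | add p q hp hq =>
    simp only [map_add]
    refine (hp.fun_add hq).congr_fderiv ?_
    ext v
    simp [add_mul, Finset.sum_add_distrib]
  | mul_X p k hp =>
    simp only [map_mul, eval_X]
    rcases k with i | i
    · refine (hp.fun_mul (hasFDerivAt_apply i z)).congr_fderiv ?_
      ext v
      simp [Pi.single_apply, apply_ite, add_mul, ite_mul, Finset.mul_sum, Finset.sum_add_distrib,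
        mul_assoc]
    · refine (hp.mul_const (w i)).congr_fderiv ?_
      ext v
      simp [Finset.mul_sum, mul_assoc]

section Polarized

variable {n : ℕ}

theorem eps_mul_self (ℓ : ℕ) (j : Fin n) : eps n ℓ j * eps n ℓ j = 1 := by
  unfold eps; split_ifs <;> norm_num

theorem eps_ne_zero (ℓ : ℕ) (j : Fin n) : eps n ℓ j ≠ 0 :=
  left_ne_zero_of_mul_eq_one (eps_mul_self ℓ j)

theorem Dz_eval_sumElim (P : MvPolynomial (Fin n ⊕ Fin n) ℂ) (j : Fin n) :
    Dz (fun z w => eval (Sum.elim z w) P) j =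
      fun z w => eval (Sum.elim z w) (pderiv (.inl j) P) := by
  ext z w
  simp [Dz, (hasFDerivAt_eval_sumElim P z w).fderiv, Pi.single_apply]

theorem Dw_eval_sumElim (P : MvPolynomial (Fin n ⊕ Fin n) ℂ) (j : Fin n) :
    Dw (fun z w => eval (Sum.elim z w) P) j =
      fun z w => eval (Sum.elim z w) (pderiv (.inr j) P) := by
  have hswap (z w : Fin n → ℂ) (Q : MvPolynomial (Fin n ⊕ Fin n) ℂ) :
      eval (Sum.elim z w) Q = eval (Sum.elim w z) (rename Sum.swap Q) := by
    rw [eval_rename, Sum.elim_swap]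
  ext z w
  have h := (pderiv_rename Sum.swap_leftInverse.injective (Sum.inr j) P).symm
  simp only [Dw, hswap z, Sum.swap_inr] at h ⊢
  simp [(hasFDerivAt_eval_sumElim _ _ z).fderiv, Pi.single_apply, h]

def lapLPoly (n ℓ : ℕ) : MvPolynomial (Fin n ⊕ Fin n) ℂ →ₗ[ℂ] MvPolynomial (Fin n ⊕ Fin n) ℂ :=
  ∑ j, eps n ℓ j • ((pderiv (.inr j)).toLinearMap ∘ₗ (pderiv (.inl j)).toLinearMap)

theorem lapL_eval_sumElim (ℓ : ℕ) (P : MvPolynomial (Fin n ⊕ Fin n) ℂ) :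
    lapL ℓ (fun z w => eval (Sum.elim z w) P) =
      fun z w => eval (Sum.elim z w) (lapLPoly n ℓ P) := by
  ext z w
  simp [lapL, lapLPoly, Dz_eval_sumElim, Dw_eval_sumElim]

def bilinPoly (b : Fin n → Fin n → ℂ) : MvPolynomial (Fin n ⊕ Fin n) ℂ :=
  ∑ j, ∑ k, C (b j k) * X (.inl k) * X (.inr j)

def quarticPoly (s : Fin n → Fin n → Fin n → Fin n → ℂ) : MvPolynomial (Fin n ⊕ Fin n) ℂ :=
  ∑ α, ∑ β, ∑ γ, ∑ δ, C (s α β γ δ) * X (.inl α) * X (.inr β) * X (.inl γ) * X (.inr δ)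

theorem eval_bilinPoly (b : Fin n → Fin n → ℂ) (x : Fin n ⊕ Fin n → ℂ) :
    eval x (bilinPoly b) = ∑ j, (∑ k, b j k * x (.inl k)) * x (.inr j) := by
  simp [bilinPoly, Finset.sum_mul]

theorem eval_bilinPoly_g0 (ℓ : ℕ) (z w : Fin n → ℂ) :
    eval (Sum.elim z w) (bilinPoly (g0 n ℓ)) = ∑ j, eps n ℓ j * z j * w j := by
  simp [eval_bilinPoly, g0]

theorem quartic_eq_eval (s : Fin n → Fin n → Fin n → Fin n → ℂ) :
    quartic s = fun z w => eval (Sum.elim z w) (quarticPoly s) := by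
  ext z w
  simp [quartic, quarticPoly]

theorem pderiv_inl_bilinPoly (b : Fin n → Fin n → ℂ) (j : Fin n) :
    pderiv (.inl j) (bilinPoly b) = ∑ q, C (b q j) * X (.inr q) := by
  simp [bilinPoly, Pi.single_apply, mul_comm]

theorem pderiv_inr_bilinPoly (b : Fin n → Fin n → ℂ) (j : Fin n) :
    pderiv (.inr j) (bilinPoly b) = ∑ k, C (b j k) * X (.inl k) := by
  simp [bilinPoly, Pi.single_apply]

theorem lapLPoly_bilinPoly (ℓ : ℕ) (b : Fin n → Fin n → ℂ) :
    lapLPoly n ℓ (bilinPoly b) = C (∑ j, eps n ℓ j * b j j) := by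
  simp [lapLPoly, pderiv_inl_bilinPoly, Pi.single_apply, smul_eq_C_mul]

theorem lapLPoly_bilinPoly_mul_g0 (ℓ : ℕ) (b : Fin n → Fin n → ℂ) :
    lapLPoly n ℓ (bilinPoly b * bilinPoly (g0 n ℓ))
      = (∑ j, eps n ℓ j * b j j) • bilinPoly (g0 n ℓ) + ((n : ℂ) + 2) • bilinPoly b := by
  refine MvPolynomial.funext fun x => ?_
  simp only [lapLPoly, LinearMap.coe_sum, LinearMap.coe_smul, LinearMap.coe_comp,
    Derivation.coeFn_coe, Finset.sum_apply, Pi.smul_apply, Function.comp_apply, Derivation.leibniz,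
    pderiv_inl_bilinPoly, g0, smul_eq_mul, map_add, map_sum, pderiv_X, Pi.single_apply,
    Sum.inr.injEq, mul_ite, mul_one, mul_zero, derivation_C, add_zero, Finset.sum_ite_eq',
    Finset.mem_univ, ↓reduceIte, pderiv_inr_bilinPoly, smul_add, smul_eval, map_mul, eval_bilinPoly,
    eval_C, eval_X, ite_mul, zero_mul, Finset.sum_ite_eq]
  set B := ∑ j, (∑ k, b j k * x (.inl k)) * x (.inr j)
  set N := ∑ j, eps n ℓ j * x (.inl j) * x (.inr j)
  calc _ = ∑ j, (B + x (.inr j) * (∑ k, b j k * x (.inl k)) + eps n ℓ j * b j j * N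
        + (∑ q, b q j * x (.inr q)) * x (.inl j)) :=
        Finset.sum_congr rfl fun j _ => by
          linear_combination (B + x (.inr j) * (∑ k, b j k * x (.inl k))
            + (∑ q, b q j * x (.inr q)) * x (.inl j)) * eps_mul_self ℓ j
    _ = _ := by
      have h1 : ∑ j, x (.inr j) * (∑ k, b j k * x (.inl k)) = B :=
        Finset.sum_congr rfl fun j _ => mul_comm _ _
      have h2 : ∑ j, (∑ q, b q j * x (.inr q)) * x (.inl j) = B := by
        simp only [B, Finset.sum_mul]
        rw [Finset.sum_comm]
        exact Finset.sum_congr rfl fun q _ => Finset.sum_congr rfl fun k _ => by ring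
      simp only [Finset.sum_add_distrib, h1, h2, Finset.sum_const, Finset.card_univ,
        Fintype.card_fin, nsmul_eq_mul, ← Finset.sum_mul]
      ring

theorem lapL_quartic (ℓ : ℕ) (s : Fin n → Fin n → Fin n → Fin n → ℂ) (z w : Fin n → ℂ) :
    lapL ℓ (quartic s) z w = eval (Sum.elim z w) (lapLPoly n ℓ (quarticPoly s)) := by
  rw [quartic_eq_eval, lapL_eval_sumElim]

theorem lapLPoly_quarticPoly_eq_zero {ℓ : ℕ} {s : Fin n → Fin n → Fin n → Fin n → ℂ}
    (hs : ∀ z : Fin n → ℂ, lapL ℓ (quartic s) z (fun j => conj (z j)) = 0) :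
    lapLPoly n ℓ (quarticPoly s) = 0 :=
  eq_zero_of_eval_sumElim_conj fun z => by rw [← lapL_quartic]; exact hs z

theorem bilinPoly_mul_g0_eq_quarticPoly_sub {ℓ : ℕ} {a : Fin n → Fin n → ℂ}
    {s t : Fin n → Fin n → Fin n → Fin n → ℂ}
    (heq : ∀ z : Fin n → ℂ,
      (∑ j, eps n ℓ j * (∑ k, a j k * z k) * conj (z j)) * nSq n ℓ z
        = (1 / 4) * (quartic s z (fun j => conj (z j)) - quartic t z (fun j => conj (z j)))) :
    bilinPoly (fun j k => eps n ℓ j * a j k) * bilinPoly (g0 n ℓ)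
      = (1 / 4 : ℂ) • (quarticPoly s - quarticPoly t) := by
  refine sub_eq_zero.1 (eq_zero_of_eval_sumElim_conj fun z => ?_)
  have hz := heq z
  simp only [quartic_eq_eval, nSq] at hz
  simp only [map_sub, map_mul, smul_eval, eval_bilinPoly_g0]
  simp only [eval_bilinPoly, Sum.elim_inl, Sum.elim_inr]
  simp only [Finset.mul_sum, Finset.sum_mul, mul_assoc] at hz ⊢
  linear_combination hz

theorem bilinPoly_eq_zero_of_lapLPoly_mul_g0_eq_zero {ℓ : ℕ} {b : Fin n → Fin n → ℂ}
    (h : lapLPoly n ℓ (bilinPoly b * bilinPoly (g0 n ℓ)) = 0) : bilinPoly b = 0 := by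
  rw [lapLPoly_bilinPoly_mul_g0] at h
  set τ := ∑ j, eps n ℓ j * b j j
  have hτ : τ = 0 := by
    have h' := congrArg (fun P => eval 0 (lapLPoly n ℓ P)) h
    simp only [map_add, map_smul, lapLPoly_bilinPoly, map_zero, smul_eval, eval_C, g0, if_true,
      eps_mul_self, Finset.sum_const, Finset.card_univ, Fintype.card_fin, nsmul_eq_mul,
      mul_one] at h'
    have h2 : ((2 : ℂ) * n + 2) * τ = 0 := by linear_combination h'
    exact (mul_eq_zero.1 h2).resolve_left (by norm_cast)
  have hn2 : (n : ℂ) + 2 ≠ 0 := by norm_cast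
  simpa [hτ, hn2] using h

theorem eq_zero_of_bilinPoly_eq_zero {b : Fin n → Fin n → ℂ} (h : bilinPoly b = 0) : b = 0 := by
  ext j k
  simpa [eval_bilinPoly, Pi.single_apply] using
    congrArg (eval (Sum.elim (Pi.single k 1) (Pi.single j 1))) h

end Polarized

theorem stmt6_general {n ℓ : ℕ}
    (a : Fin n → Fin n → ℂ)
    (s t : Fin n → Fin n → Fin n → Fin n → ℂ)
    (hs : ∀ z : Fin n → ℂ, lapL ℓ (quartic s) z (fun j => conj (z j)) = 0)
    (ht : ∀ z : Fin n → ℂ, lapL ℓ (quartic t) z (fun j => conj (z j)) = 0)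
    (heq : ∀ z : Fin n → ℂ,
      (∑ j : Fin n, eps n ℓ j * (∑ k : Fin n, a j k * z k) * conj (z j)) * nSq n ℓ z
        = (1 / 4) * (quartic s z (fun j => conj (z j))
            - quartic t z (fun j => conj (z j)))) :
    (∀ (z : Fin n → ℂ) (j : Fin n), (∑ k : Fin n, a j k * z k) = 0) ∧
    (∀ z : Fin n → ℂ,
      quartic s z (fun j => conj (z j)) = quartic t z (fun j => conj (z j))) := by
  have hlap :
      lapLPoly n ℓ (bilinPoly (fun j k => eps n ℓ j * a j k) * bilinPoly (g0 n ℓ)) = 0 := by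
    rw [bilinPoly_mul_g0_eq_quarticPoly_sub heq, map_smul, map_sub, lapLPoly_quarticPoly_eq_zero hs,
      lapLPoly_quarticPoly_eq_zero ht, sub_zero, smul_zero]
  have ha : a = 0 := by
    ext j k
    have hjk := congrFun₂ (eq_zero_of_bilinPoly_eq_zero
      (bilinPoly_eq_zero_of_lapLPoly_mul_g0_eq_zero hlap)) j k
    exact (mul_eq_zero.1 hjk).resolve_left (eps_ne_zero ℓ j)
  subst ha
  refine ⟨fun z j => by simp, fun z => ?_⟩
  have hz := heq z
  simp only [Pi.zero_apply, zero_mul, mul_zero, Finset.sum_const_zero] at hz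
  linear_combination (-4 : ℂ) * hz

/-- if `⟨a⁽¹⁾(z), z̄⟩_ℓ |z|_ℓ² = (1/4)(s - s♯)` with `s, s♯` real
`△_ℓ`-harmonic bidegree (2,2) polynomials, then `a⁽¹⁾ ≡ 0` and `s ≡ s♯`. -/
theorem stmt6 {n ℓ : ℕ} (hn : 2 ≤ n) (hl : 2 * ℓ ≤ n)
    (a : Fin n → Fin n → ℂ)
    (s t : Fin n → Fin n → Fin n → Fin n → ℂ)
    (hsreal : ∀ α β γ δ, conj (s α β γ δ) = s β α δ γ)
    (htreal : ∀ α β γ δ, conj (t α β γ δ) = t β α δ γ)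
    (hs : ∀ z : Fin n → ℂ, lapL ℓ (quartic s) z (fun j => conj (z j)) = 0)
    (ht : ∀ z : Fin n → ℂ, lapL ℓ (quartic t) z (fun j => conj (z j)) = 0)
    (heq : ∀ z : Fin n → ℂ,
      (∑ j : Fin n, eps n ℓ j * (∑ k : Fin n, a j k * z k) * conj (z j)) * nSq n ℓ z
        = (1 / 4) * (quartic s z (fun j => conj (z j))
            - quartic t z (fun j => conj (z j)))) :
    (∀ (z : Fin n → ℂ) (j : Fin n), (∑ k : Fin n, a j k * z k) = 0) ∧
    (∀ z : Fin n → ℂ,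
      quartic s z (fun j => conj (z j)) = quartic t z (fun j => conj (z j))) :=
  stmt6_general a s t hs ht heq

end
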